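/- Let x_1, x_2 be unimodular lattices in ℝ^d such that x_1 is GFL and there exists c > 0 with c·x_1 commensurable with x_2 (i.e., c·x_1 ∩ x_2 has finite index in both c·x_1 and x_2). Then x_2 is GFL. -/

import Mathlib

/-!
Since `c·x₁ ∩ x₂` has finite index in `c·x₁`, pigeonhole gives `m ≥ 1` with `m c x₁ ⊆ x₂`.
Given `v`, pick `n ≠ 0` with `N(x₁ + n c⁻¹ v) = 0`; scaling by `m c` maps this grid into
`x₂ + m n v` and multiplies `N` by `(m c)^d`, so `N(x₂ + m n v) = 0`.
-/

open scoped BigOperators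

noncomputable section

/-- `SL_d(ℝ)`. -/
abbrev SLd (d : ℕ) := Matrix.SpecialLinearGroup (Fin d) ℝ

/-- The unimodular lattice `gℤ^d ⊆ ℝ^d`. -/
def latticeOf {d : ℕ} (g : SLd d) : Set (Fin d → ℝ) :=
  Set.range fun m : Fin d → ℤ => (g : Matrix (Fin d) (Fin d) ℝ).mulVec fun i => (m i : ℝ)

/-- A unimodular lattice in `ℝ^d` is a set of the form `gℤ^d` for some `g ∈ SL_d(ℝ)`. -/
def IsUnimodularLattice {d : ℕ} (x : Set (Fin d → ℝ)) : Prop :=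
  ∃ g : SLd d, x = latticeOf g

/-- The grid `x + v`. -/
def grid {d : ℕ} (x : Set (Fin d → ℝ)) (v : Fin d → ℝ) : Set (Fin d → ℝ) :=
  (fun u => u + v) '' x

/-- `N(y) = inf {|∏ i, w i| : w ∈ y}`. -/
def Ngrid {d : ℕ} (y : Set (Fin d → ℝ)) : ℝ :=
  sInf {r : ℝ | ∃ w ∈ y, r = |∏ i, w i|}

/-- The grid `x + v` is L (Littlewood): `inf {|n|·N(x + nv) : n ∈ ℤ, n ≠ 0} = 0`. -/
def IsL {d : ℕ} (x : Set (Fin d → ℝ)) (v : Fin d → ℝ) : Prop :=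
  sInf {r : ℝ | ∃ n : ℤ, n ≠ 0 ∧ r = |(n : ℝ)| * Ngrid (grid x ((n : ℝ) • v))} = 0

/-- The grid `x + v` is FL (L of finite type): `N(x + nv) = 0` for some nonzero integer `n`. -/
def IsFL {d : ℕ} (x : Set (Fin d → ℝ)) (v : Fin d → ℝ) : Prop :=
  ∃ n : ℤ, n ≠ 0 ∧ Ngrid (grid x ((n : ℝ) • v)) = 0

/-- A lattice `x` is GL if every grid `x + v` is L. -/
def IsGL {d : ℕ} (x : Set (Fin d → ℝ)) : Prop := ∀ v : Fin d → ℝ, IsL x v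

/-- A lattice `x` is GFL if every grid `x + v` is FL. -/
def IsGFL {d : ℕ} (x : Set (Fin d → ℝ)) : Prop := ∀ v : Fin d → ℝ, IsFL x v

open Pointwise

namespace AddSubgroup

variable {G : Type*} [AddGroup G] {H K : AddSubgroup G} {F : Finset G}

-- Pigeonhole on `i • w - f i ∈ K` for `i = 0, …, #F`: two indices share the representative `f`.
theorem exists_pos_le_card_nsmul_mem (hF : ∀ w ∈ H, ∃ f ∈ F, w - f ∈ K)
    {w : G} (hw : w ∈ H) : ∃ k : ℕ, 0 < k ∧ k ≤ F.card ∧ k • w ∈ K := by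
  choose f hfF hfK using fun i : ℕ => hF (i • w) (H.nsmul_mem hw i)
  have hdiff : ∀ i j, j < i → f i = f j → (i - j) • w ∈ K := fun i j hji hfij => by
    have := K.sub_mem (hfK i) (hfK j)
    rwa [hfij, sub_sub_sub_cancel_right, sub_eq_add_neg, ← sub_nsmul w hji.le] at this
  obtain ⟨i, hi, j, hj, hij, hfij⟩ := Finset.exists_ne_map_eq_of_card_lt_of_maps_to
    (s := Finset.range (F.card + 1)) (by simp) (fun i _ => hfF i)
  rw [Finset.mem_range] at hi hj
  rcases hij.lt_or_gt with hlt | hlt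
  · exact ⟨j - i, by omega, by omega, hdiff j i hlt hfij.symm⟩
  · exact ⟨i - j, by omega, by omega, hdiff i j hlt hfij⟩

theorem exists_pos_forall_nsmul_mem
    (hF : ∀ w ∈ H, ∃ f ∈ F, w - f ∈ K) : ∃ m : ℕ, 0 < m ∧ ∀ w ∈ H, m • w ∈ K := by
  refine ⟨F.card.factorial, Nat.factorial_pos _, fun w hw => ?_⟩
  obtain ⟨k, hk, hkF, hkw⟩ := exists_pos_le_card_nsmul_mem hF hw
  obtain ⟨q, hq⟩ := Nat.dvd_factorial hk hkF
  rw [hq, mul_nsmul]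
  exact K.nsmul_mem hkw q

end AddSubgroup

theorem IsUnimodularLattice.exists_addSubgroup {d : ℕ} {x : Set (Fin d → ℝ)}
    (hx : IsUnimodularLattice x) : ∃ L : AddSubgroup (Fin d → ℝ), (L : Set (Fin d → ℝ)) = x := by
  obtain ⟨g, rfl⟩ := hx
  exact ⟨((Matrix.mulVecLin (g : Matrix (Fin d) (Fin d) ℝ)).toAddMonoidHom.comp
    ((Int.castAddHom ℝ).compLeft (Fin d))).range, rfl⟩

section Ngrid

variable {d : ℕ}

theorem Ngrid_eq_sInf_image (y : Set (Fin d → ℝ)) :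
    Ngrid y = sInf ((fun w => |∏ i, w i|) '' y) := by
  simp only [Ngrid, Set.image, eq_comm]

theorem Ngrid_nonneg (y : Set (Fin d → ℝ)) : 0 ≤ Ngrid y :=
  Real.sInf_nonneg fun _ ⟨_, _, hr⟩ => hr ▸ abs_nonneg _

theorem Ngrid_le_of_subset {y y' : Set (Fin d → ℝ)} (hy : y.Nonempty) (h : y ⊆ y') :
    Ngrid y' ≤ Ngrid y := by
  rw [Ngrid_eq_sInf_image, Ngrid_eq_sInf_image]
  exact csInf_le_csInf ⟨0, by rintro _ ⟨w, -, rfl⟩; exact abs_nonneg _⟩ (hy.image _)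
    (Set.image_mono h)

theorem Ngrid_smul (a : ℝ) (y : Set (Fin d → ℝ)) : Ngrid (a • y) = |a| ^ d * Ngrid y := by
  have himage : (fun w => |∏ i, w i|) '' (a • y) = (|a| ^ d) • (fun w => |∏ i, w i|) '' y := by
    rw [← Set.image_smul, ← Set.image_smul, Set.image_image, Set.image_image]
    refine Set.image_congr fun w _ => ?_
    simp [Finset.prod_mul_distrib, abs_mul, abs_pow]
  rw [Ngrid_eq_sInf_image, Ngrid_eq_sInf_image, himage,
    Real.sInf_smul_of_nonneg (by positivity), smul_eq_mul]

end Ngrid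

theorem IsFL.of_smul_mem {d : ℕ} {x x' : Set (Fin d → ℝ)} {v : Fin d → ℝ} (hx : x.Nonempty)
    {m : ℤ} (hm : m ≠ 0) (t : ℝ) (hsub : ∀ u ∈ x, ((m : ℝ) * t) • u ∈ x') (h : IsFL x v) :
    IsFL x' (t • v) := by
  obtain ⟨n, hn, hN⟩ := h
  refine ⟨m * n, mul_ne_zero hm hn, le_antisymm ?_ (Ngrid_nonneg _)⟩
  have hscaled : ((m : ℝ) * t) • grid x ((n : ℝ) • v) ⊆ grid x' (((m * n : ℤ) : ℝ) • t • v) := by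
    rintro _ ⟨_, ⟨u, hu, rfl⟩, rfl⟩
    refine ⟨_, hsub u hu, ?_⟩
    simp only [smul_add, smul_smul]
    push_cast
    ring_nf
  calc Ngrid (grid x' (((m * n : ℤ) : ℝ) • t • v))
      ≤ Ngrid (((m : ℝ) * t) • grid x ((n : ℝ) • v)) :=
        Ngrid_le_of_subset ((hx.image _).smul_set) hscaled
    _ = 0 := by rw [Ngrid_smul, hN, mul_zero]

theorem stmt_11_general (d : ℕ) (x1 x2 : Set (Fin d → ℝ))
    (hx1 : IsUnimodularLattice x1) (hx2 : IsUnimodularLattice x2)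
    (h1 : IsGFL x1) (c : ℝ) (hc : 0 < c)
    (hcomm : ∃ F1 F2 : Finset (Fin d → ℝ),
      (∀ w ∈ (fun u => c • u) '' x1, ∃ f ∈ F1, w - f ∈ ((fun u => c • u) '' x1) ∩ x2) ∧
      (∀ w ∈ x2, ∃ f ∈ F2, w - f ∈ ((fun u => c • u) '' x1) ∩ x2)) :
    IsGFL x2 := by
  obtain ⟨L1, rfl⟩ := hx1.exists_addSubgroup
  obtain ⟨L2, rfl⟩ := hx2.exists_addSubgroup
  obtain ⟨F1, -, hF1, -⟩ := hcomm
  have hcL1 : (fun u => c • u) '' (L1 : Set (Fin d → ℝ)) = ↑(c • L1) := by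
    rw [Set.image_smul, AddSubgroup.coe_pointwise_smul]
  rw [hcL1, ← AddSubgroup.coe_inf] at hF1
  obtain ⟨m, hm, hmK⟩ := AddSubgroup.exists_pos_forall_nsmul_mem hF1
  intro v
  rw [← smul_inv_smul₀ hc.ne' v]
  refine (h1 (c⁻¹ • v)).of_smul_mem ⟨0, L1.zero_mem⟩ (m := m) (by omega) c fun u hu => ?_
  have hmcu := (hmK (c • u) (AddSubgroup.smul_mem_pointwise_smul u c L1 hu)).2
  rwa [Int.cast_natCast, ← smul_smul, Nat.cast_smul_eq_nsmul]

/-- If `x₁` is GFL and `c·x₁` is commensurable with `x₂` for some `c > 0` (the intersection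
`c·x₁ ∩ x₂` has finite index in both, i.e. finitely many of its translates cover each),
then `x₂` is GFL. -/
theorem stmt_11 (d : ℕ) (hd : 2 ≤ d) (x1 x2 : Set (Fin d → ℝ))
    (hx1 : IsUnimodularLattice x1) (hx2 : IsUnimodularLattice x2)
    (h1 : IsGFL x1) (c : ℝ) (hc : 0 < c)
    (hcomm : ∃ F1 F2 : Finset (Fin d → ℝ),
      (∀ w ∈ (fun u => c • u) '' x1, ∃ f ∈ F1, w - f ∈ ((fun u => c • u) '' x1) ∩ x2) ∧
      (∀ w ∈ x2, ∃ f ∈ F2, w - f ∈ ((fun u => c • u) '' x1) ∩ x2)) :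
    IsGFL x2 :=
  stmt_11_general d x1 x2 hx1 hx2 h1 c hc hcomm

end
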